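/- arXiv:1812.04874 — 4 statements merged into one kernel-verified Lean document; each statement's English description precedes it below -/
import Mathlib

section
/- Let X ⊆ ℝⁿ be a closed convex set, r > 0, and f a polynomial of degree d > 0 with 0 < m < inf{f(x) : x ∈ X} for some m. Then there exists N₀ ∈ ℕ such that for every integer N ≥ N₀ and every ξ ∈ ℝⁿ with |ξ| ≤ r, the function Φ_{N,ξ}(x) = e^{e^{N|x-ξ|²}} f(x) is strongly convex on X. -/
open Real Set MvPolynomial Finset

lemma aux_eval_bound {n : ℕ} (g : MvPolynomial (Fin n) ℝ) {z : Fin n → ℝ} {R : ℝ}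
    (hR : 1 ≤ R) (hz : ∀ i, |z i| ≤ R) :
    |eval z g| ≤ (∑ α ∈ g.support, |coeff α g|) * R ^ g.totalDegree := by
  rw [eval_eq']
  refine (Finset.abs_sum_le_sum_abs _ _).trans ?_
  rw [Finset.sum_mul]
  refine Finset.sum_le_sum fun α hα => ?_
  rw [abs_mul]
  have h0 : (0:ℝ) ≤ R := le_trans zero_le_one hR
  have h1 : |∏ i, z i ^ α i| ≤ R ^ g.totalDegree := by
    calc |∏ i, z i ^ α i| = ∏ i, |z i| ^ α i := by
          rw [Finset.abs_prod]; exact Finset.prod_congr rfl fun i _ => abs_pow _ _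
      _ ≤ ∏ i, R ^ α i :=
          Finset.prod_le_prod (fun i _ => by positivity)
            (fun i _ => pow_le_pow_left₀ (abs_nonneg _) (hz i) _)
      _ = R ^ (∑ i, α i) := by rw [Finset.prod_pow_eq_pow_sum]
      _ ≤ R ^ g.totalDegree := by
          apply pow_le_pow_right₀ hR
          have := MvPolynomial.le_totalDegree hα
          rwa [Finsupp.sum_fintype _ _ (fun _ => rfl)] at this
  exact mul_le_mul_of_nonneg_left h1 (abs_nonneg _)

lemma aux_hasDerivAt_eval {n : ℕ} (x v : Fin n → ℝ) (f : MvPolynomial (Fin n) ℝ) (t : ℝ) :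
    HasDerivAt (fun s : ℝ => eval (fun i => x i + s * v i) f)
      (∑ i, v i * eval (fun i => x i + t * v i) (pderiv i f)) t := by
  induction f using MvPolynomial.induction_on with
  | C a => simpa [MvPolynomial.pderiv_C] using hasDerivAt_const t a
  | add p q hp hq =>
      simpa [map_add, mul_add, Finset.sum_add_distrib] using hp.fun_add hq
  | mul_X p i hp =>
      have hlin : HasDerivAt (fun s : ℝ => x i + s * v i) (v i) t := by
        simpa using ((hasDerivAt_id t).mul_const (v i)).const_add (x i)
      have hmul := hp.mul hlin
      have key : ∀ j : Fin n, eval (fun k => x k + t * v k) (pderiv j (p * X i)) =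
          eval (fun k => x k + t * v k) (pderiv j p) * (x i + t * v i) +
          eval (fun k => x k + t * v k) p * (if j = i then 1 else 0) := by
        intro j
        classical
        rw [pderiv_mul, map_add, map_mul, map_mul, eval_X, pderiv_X]
        by_cases h : j = i <;> simp [Pi.single_apply, h]
      have hsum : ∑ j, v j * eval (fun k => x k + t * v k) (pderiv j (p * X i)) =
          (∑ j, v j * eval (fun k => x k + t * v k) (pderiv j p)) * (x i + t * v i) +
          eval (fun k => x k + t * v k) p * v i := by
        classical
        have hterm : ∀ j : Fin n, v j * eval (fun k => x k + t * v k) (pderiv j (p * X i)) =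
            v j * eval (fun k => x k + t * v k) (pderiv j p) * (x i + t * v i) +
            (if j = i then v j * eval (fun k => x k + t * v k) p else 0) := by
          intro j; rw [key]; by_cases h : j = i <;> simp [h] <;> ring
        rw [Finset.sum_congr rfl fun j _ => hterm j, Finset.sum_add_distrib,
          Finset.sum_ite_eq' Finset.univ i fun j => v j * eval (fun k => x k + t * v k) p,
          ← Finset.sum_mul]
        simp only [Finset.mem_univ, if_true]
        ring
      rw [show (fun s : ℝ => eval (fun k => x k + s * v k) (p * X i)) =
          (fun s : ℝ => eval (fun k => x k + s * v k) p * (x i + s * v i)) from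
        funext fun s => by rw [map_mul, eval_X]]
      rw [hsum]
      exact hmul


lemma aux_pos {m a bb s Pt P1t P2t W R NN K : ℝ} (hm : 0 < m) (ha : 1 ≤ a) (hbb : 1 ≤ bb)
    (hPt : m ≤ Pt) (hBAD : P1t ^ 2 / m + |P2t| ≤ K * W ^ 2 * R)
    (hNN : 0 ≤ NN) (hkey : K * R + 1 ≤ 2 * NN * m * bb) :
    0 ≤ (a * (bb * s) * (bb * s) + a * (bb * s * s + bb * (NN * (2 * W ^ 2)))) * Pt +
      a * (bb * s) * P1t + (a * (bb * s) * P1t + a * P2t) - 1 / 2 * (2 * W ^ 2) := by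
  have ha0 : 0 ≤ a := by linarith
  have hbb0 : 0 ≤ bb := by linarith
  have hPt0 : 0 ≤ Pt := le_trans hm.le hPt
  have hmul : P1t ^ 2 / m * m = P1t ^ 2 := div_mul_cancel₀ _ hm.ne'
  have hXnn : 0 ≤ (bb * s) ^ 2 * m + 2 * (bb * s) * P1t + P1t ^ 2 / m := by
    nlinarith [sq_nonneg (bb * s * m + P1t), hm, hmul]
  have h2 : 0 ≤ a * ((bb * s) ^ 2 * Pt + 2 * (bb * s) * P1t + P1t ^ 2 / m) :=
    mul_nonneg ha0 (by nlinarith [hXnn, mul_nonneg (sq_nonneg (bb * s)) (sub_nonneg.2 hPt)])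
  have h1 : 0 ≤ a * bb * s ^ 2 * Pt :=
    mul_nonneg (mul_nonneg (mul_nonneg ha0 hbb0) (sq_nonneg s)) hPt0
  have hint3 : 0 ≤ 2 * a * NN * bb * W ^ 2 * (Pt - m) :=
    mul_nonneg (mul_nonneg (mul_nonneg (mul_nonneg (by linarith) hNN) hbb0) (sq_nonneg W))
      (sub_nonneg.2 hPt)
  have hint4 : 0 ≤ a * (K * W ^ 2 * R - (P1t ^ 2 / m + |P2t|)) :=
    mul_nonneg ha0 (sub_nonneg.2 hBAD)
  have hint5 : a * (-|P2t|) ≤ a * P2t := mul_le_mul_of_nonneg_left (neg_abs_le _) ha0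
  have hint1 : 0 ≤ a * W ^ 2 * (2 * NN * m * bb - K * R - 1) :=
    mul_nonneg (mul_nonneg ha0 (sq_nonneg W)) (by linarith)
  have hint2 : 0 ≤ (a - 1) * W ^ 2 := mul_nonneg (by linarith) (sq_nonneg W)
  nlinarith [h1, h2, hint1, hint2, hint3, hint4, hint5]

lemma aux_key {n : ℕ} (ξ : EuclideanSpace ℝ (Fin n)) {r m K : ℝ} (hr : 0 < r) (hm : 0 < m)
    (hK : 0 ≤ K) (EE : ℕ) (N : ℕ) (hξ : ‖ξ‖ ≤ r) (hN1 : (1 : ℝ) ≤ N)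
    (hNm : K * (2 + 2 * r) ^ EE + K * Real.exp ((EE : ℝ) ^ 2) + 2 ≤ 2 * N * m)
    (u : EuclideanSpace ℝ (Fin n)) :
    K * (1 + ‖u‖) ^ EE + 1 ≤ 2 * N * m * Real.exp ((N : ℝ) * ‖u - ξ‖ ^ 2) := by
  have hA0 : (0:ℝ) ≤ K * (2 + 2*r)^EE := mul_nonneg hK (by positivity)
  have hB0 : (0:ℝ) ≤ K * Real.exp ((EE : ℝ) ^ 2) := mul_nonneg hK (Real.exp_nonneg _)
  have hNm0 : (0 : ℝ) ≤ 2 * N * m := by linarith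
  by_cases hu : ‖u‖ ≤ 2 * r + 1
  · have h1 : (1 : ℝ) ≤ Real.exp ((N : ℝ) * ‖u - ξ‖ ^ 2) :=
      Real.one_le_exp (by positivity)
    have h2 : (1 + ‖u‖) ^ EE ≤ (2 + 2 * r) ^ EE :=
      pow_le_pow_left₀ (by positivity) (by linarith) _
    have h3 : K * (1 + ‖u‖) ^ EE ≤ K * (2 + 2 * r) ^ EE := mul_le_mul_of_nonneg_left h2 hK
    have h4 : 2 * (N:ℝ) * m ≤ 2 * N * m * Real.exp ((N : ℝ) * ‖u - ξ‖ ^ 2) :=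
      le_mul_of_one_le_right hNm0 h1
    linarith
  · push_neg at hu
    have hd : ‖u‖ - r ≤ ‖u - ξ‖ := by
      have := norm_sub_norm_le u ξ
      linarith
    have h3 : ‖u‖ ^ 2 / 4 ≤ ‖u - ξ‖ ^ 2 := by nlinarith [norm_nonneg (u - ξ)]
    have h4 : Real.exp (‖u‖ ^ 2 / 4) ≤ Real.exp ((N : ℝ) * ‖u - ξ‖ ^ 2) := by
      apply Real.exp_le_exp.2
      nlinarith [mul_nonneg (by linarith : (0:ℝ) ≤ (N:ℝ) - 1) (sq_nonneg ‖u - ξ‖)]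
    have ha : 1 + ‖u‖ ≤ Real.exp ‖u‖ := by
      have := Real.add_one_le_exp ‖u‖; linarith
    have hb : (1 + ‖u‖) ^ EE ≤ Real.exp ‖u‖ ^ EE := pow_le_pow_left₀ (by positivity) ha _
    have hc : Real.exp ‖u‖ ^ EE = Real.exp ((EE : ℝ) * ‖u‖) := (Real.exp_nat_mul _ _).symm
    have hd2 : (EE : ℝ) * ‖u‖ ≤ (EE : ℝ) ^ 2 + ‖u‖ ^ 2 / 4 := by
      nlinarith [sq_nonneg (‖u‖ / 2 - (EE : ℝ))]
    have h5 : (1 + ‖u‖) ^ EE ≤ Real.exp ((EE : ℝ) ^ 2) * Real.exp (‖u‖ ^ 2 / 4) := by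
      rw [← Real.exp_add]
      exact hb.trans (by rw [hc]; exact Real.exp_le_exp.2 hd2)
    have t1 : K * (1 + ‖u‖) ^ EE ≤ K * (Real.exp ((EE : ℝ) ^ 2) * Real.exp (‖u‖ ^ 2 / 4)) :=
      mul_le_mul_of_nonneg_left h5 hK
    have t2 : (1:ℝ) ≤ Real.exp (‖u‖ ^ 2 / 4) := Real.one_le_exp (by positivity)
    have t3 : K * Real.exp ((EE : ℝ) ^ 2) + 1 ≤ 2 * (N:ℝ) * m := by linarith
    have t4 : (K * Real.exp ((EE : ℝ) ^ 2) + 1) * Real.exp (‖u‖ ^ 2 / 4) ≤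
        2 * (N:ℝ) * m * Real.exp (‖u‖ ^ 2 / 4) :=
      mul_le_mul_of_nonneg_right t3 (Real.exp_nonneg _)
    have t5 : 2 * (N:ℝ) * m * Real.exp (‖u‖ ^ 2 / 4) ≤
        2 * (N:ℝ) * m * Real.exp ((N : ℝ) * ‖u - ξ‖ ^ 2) :=
      mul_le_mul_of_nonneg_left h4 hNm0
    nlinarith [t1, t2, t4, t5]


set_option maxHeartbeats 2000000 in
/-- Let `X ⊆ ℝⁿ` be closed convex, `r > 0`, and `f` a polynomial of
degree `d > 0` with `0 < m < inf f(X)` for some `m`. Then there exists `N₀ ∈ ℕ` such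
that for every integer `N ≥ N₀` and every `ξ` with `|ξ| ≤ r`, the function
`Φ_{N,ξ}(x) = e^{e^{N|x-ξ|²}} f(x)` is strongly convex on `X`. -/
theorem stmt15 {n : ℕ} (X : Set (EuclideanSpace ℝ (Fin n)))
    (hXcl : IsClosed X) (hXcon : Convex ℝ X) (r : ℝ) (hr : 0 < r)
    (f : MvPolynomial (Fin n) ℝ) (hdeg : 0 < f.totalDegree)
    (m : ℝ) (hm : 0 < m)
    (hmf : ∃ m', m < m' ∧ ∀ x ∈ X, m' ≤ MvPolynomial.eval (fun i => x i) f) :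
    ∃ N₀ : ℕ, ∀ N : ℕ, N₀ ≤ N → ∀ ξ : EuclideanSpace ℝ (Fin n), ‖ξ‖ ≤ r →
      ∃ μ > 0, StrongConvexOn X μ
        (fun x => Real.exp (Real.exp ((N : ℝ) * ‖x - ξ‖ ^ 2)) *
          MvPolynomial.eval (fun i => x i) f) := by
  classical
  obtain ⟨m', hmm', hm'X⟩ := hmf
  have hmX : ∀ x ∈ X, m ≤ eval (fun i => x i) f := fun x hx => le_trans hmm'.le (hm'X x hx)
  have hnormsq : ∀ u : EuclideanSpace ℝ (Fin n), ‖u‖ ^ 2 = ∑ i, (u i) ^ 2 := by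
    intro u
    rw [EuclideanSpace.norm_eq, Real.sq_sqrt (by positivity)]
    exact Finset.sum_congr rfl fun i _ => by rw [Real.norm_eq_abs, sq_abs]
  have hcoord : ∀ (u : EuclideanSpace ℝ (Fin n)) (i : Fin n), |u i| ≤ ‖u‖ := by
    intro u i
    have h1 : (u i) ^ 2 ≤ ‖u‖ ^ 2 := by
      rw [hnormsq]
      exact Finset.single_le_sum (fun j _ => sq_nonneg (u j)) (Finset.mem_univ i)
    calc |u i| = Real.sqrt ((u i) ^ 2) := (Real.sqrt_sq_eq_abs _).symm
      _ ≤ Real.sqrt (‖u‖ ^ 2) := Real.sqrt_le_sqrt h1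
      _ = ‖u‖ := Real.sqrt_sq (norm_nonneg u)
  set c1 : Fin n → ℝ := fun i => ∑ α ∈ (pderiv i f).support, |coeff α (pderiv i f)| with hc1
  set c2 : Fin n → Fin n → ℝ := fun i j =>
    ∑ α ∈ (pderiv j (pderiv i f)).support, |coeff α (pderiv j (pderiv i f))| with hc2
  set C1 : ℝ := ∑ i, c1 i with hC1
  set C2 : ℝ := ∑ i, ∑ j, c2 i j with hC2
  have hc1nn : ∀ i, 0 ≤ c1 i := fun i => Finset.sum_nonneg fun _ _ => abs_nonneg _
  have hc2nn : ∀ i j, 0 ≤ c2 i j := fun i j => Finset.sum_nonneg fun _ _ => abs_nonneg _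
  have hC2nn : 0 ≤ C2 := Finset.sum_nonneg fun i _ => Finset.sum_nonneg fun j _ => hc2nn i j
  set DD : ℕ := max (Finset.univ.sup fun i => (pderiv i f).totalDegree)
      (Finset.univ.sup fun ij : Fin n × Fin n => (pderiv ij.2 (pderiv ij.1 f)).totalDegree)
      with hDD
  set EE : ℕ := 2 * DD with hEE
  set K : ℝ := C1 ^ 2 / m + C2 with hKdef
  have hKnn : 0 ≤ K := add_nonneg (div_nonneg (sq_nonneg _) hm.le) hC2nn
  refine ⟨⌈(K * (2 + 2 * r) ^ EE + K * Real.exp ((EE : ℝ) ^ 2) + 2) / (2 * m)⌉₊ + 1,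
    fun N hN ξ hξ => ?_⟩
  have hN1 : (1 : ℝ) ≤ (N : ℝ) := by
    have : 1 ≤ N := le_trans (Nat.le_add_left 1 _) hN
    exact_mod_cast this
  have hNm : K * (2 + 2 * r) ^ EE + K * Real.exp ((EE : ℝ) ^ 2) + 2 ≤ 2 * N * m := by
    have h2m : (0:ℝ) < 2 * m := by linarith
    have h1 : (K * (2 + 2 * r) ^ EE + K * Real.exp ((EE : ℝ) ^ 2) + 2) / (2 * m) ≤
        ((⌈(K * (2 + 2 * r) ^ EE + K * Real.exp ((EE : ℝ) ^ 2) + 2) / (2 * m)⌉₊ + 1 : ℕ) : ℝ) := by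
      push_cast
      exact le_trans (Nat.le_ceil _) (by linarith)
    have h2 : ((⌈(K * (2 + 2 * r) ^ EE + K * Real.exp ((EE : ℝ) ^ 2) + 2) / (2 * m)⌉₊ + 1 : ℕ) : ℝ)
        ≤ (N : ℝ) := Nat.cast_le.2 hN
    calc K * (2 + 2 * r) ^ EE + K * Real.exp ((EE : ℝ) ^ 2) + 2
        = (K * (2 + 2 * r) ^ EE + K * Real.exp ((EE : ℝ) ^ 2) + 2) / (2 * m) * (2 * m) :=
          (div_mul_cancel₀ _ h2m.ne').symm
      _ ≤ (N : ℝ) * (2 * m) := mul_le_mul_of_nonneg_right (h1.trans h2) h2m.le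
      _ = 2 * N * m := by ring
  refine ⟨1, one_pos, ?_⟩
  rw [strongConvexOn_iff_convex]
  refine ⟨hXcon, fun p hp q hq a b ha hb hab => ?_⟩
  set v : Fin n → ℝ := fun i => q i - p i with hv
  set W : ℝ := ‖(q - p : EuclideanSpace ℝ (Fin n))‖ with hWdef
  set P : ℝ → ℝ := fun t => eval (fun i => p i + t * v i) f with hPdef
  set P1 : ℝ → ℝ := fun t => ∑ i, v i * eval (fun k => p k + t * v k) (pderiv i f) with hP1def
  set P2 : ℝ → ℝ := fun t =>
    ∑ i, v i * ∑ j, v j * eval (fun k => p k + t * v k) (pderiv j (pderiv i f)) with hP2def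
  set Q : ℝ → ℝ := fun t => ∑ i, (p i - ξ i + t * v i) ^ 2 with hQdef
  set Q1 : ℝ → ℝ := fun t => ∑ i, 2 * (p i - ξ i + t * v i) * v i with hQ1def
  set S : ℝ → ℝ := fun t => ∑ i, (p i + t * v i) ^ 2 with hSdef
  set S1 : ℝ → ℝ := fun t => ∑ i, 2 * (p i + t * v i) * v i with hS1def
  set V2 : ℝ := ∑ i, 2 * v i ^ 2 with hV2def
  have hlinD : ∀ (c : Fin n → ℝ) (i : Fin n) (t : ℝ),
      HasDerivAt (fun s : ℝ => c i + s * v i) (v i) t := fun c i t => by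
    simpa using ((hasDerivAt_id t).mul_const (v i)).const_add (c i)
  have hsqD : ∀ (c : Fin n → ℝ) (t : ℝ),
      HasDerivAt (fun s => ∑ i, (c i + s * v i) ^ 2) (∑ i, 2 * (c i + t * v i) * v i) t := by
    intro c t
    refine HasDerivAt.fun_sum fun i _ => ?_
    have h := (hlinD c i t).fun_pow 2
    exact h.congr_deriv (by push_cast; ring)
  have hsq1D : ∀ (c : Fin n → ℝ) (t : ℝ),
      HasDerivAt (fun s => ∑ i, 2 * (c i + s * v i) * v i) (∑ i, 2 * v i ^ 2) t := by
    intro c t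
    refine HasDerivAt.fun_sum fun i _ => ?_
    have h := ((hlinD c i t).const_mul 2).mul_const (v i)
    exact h.congr_deriv (by ring)
  have hPd : ∀ t, HasDerivAt P (P1 t) t := fun t => by
    rw [hPdef, hP1def]
    exact aux_hasDerivAt_eval (fun i => p i) v f t
  have hP1d : ∀ t, HasDerivAt P1 (P2 t) t := fun t => by
    rw [hP1def, hP2def]
    exact HasDerivAt.fun_sum fun i _ =>
      (aux_hasDerivAt_eval (fun k => p k) v (pderiv i f) t).const_mul (v i)
  have hQd : ∀ t, HasDerivAt Q (Q1 t) t := fun t => by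
    rw [hQdef, hQ1def]; exact hsqD (fun i => p i - ξ i) t
  have hSd : ∀ t, HasDerivAt S (S1 t) t := fun t => by
    rw [hSdef, hS1def]; exact hsqD (fun i => p i) t
  have hQ1d : ∀ t, HasDerivAt Q1 V2 t := fun t => by
    rw [hQ1def, hV2def]; exact hsq1D (fun i => p i - ξ i) t
  have hS1d : ∀ t, HasDerivAt S1 V2 t := fun t => by
    rw [hS1def, hV2def]; exact hsq1D (fun i => p i) t
  have hBd : ∀ t, HasDerivAt (fun t => Real.exp ((N:ℝ) * Q t))
      (Real.exp ((N:ℝ) * Q t) * ((N:ℝ) * Q1 t)) t := fun t => ((hQd t).const_mul (N:ℝ)).exp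
  have hEd : ∀ t, HasDerivAt (fun t => Real.exp (Real.exp ((N:ℝ) * Q t)))
      (Real.exp (Real.exp ((N:ℝ) * Q t)) * (Real.exp ((N:ℝ) * Q t) * ((N:ℝ) * Q1 t))) t :=
    fun t => (hBd t).exp
  set gψ : ℝ → ℝ := fun t => Real.exp (Real.exp ((N:ℝ) * Q t)) * P t - 1 / 2 * S t with hgψdef
  set gψ1 : ℝ → ℝ := fun t =>
    Real.exp (Real.exp ((N:ℝ) * Q t)) * (Real.exp ((N:ℝ) * Q t) * ((N:ℝ) * Q1 t)) * P t +
      Real.exp (Real.exp ((N:ℝ) * Q t)) * P1 t - 1 / 2 * S1 t with hgψ1def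
  set gψ2 : ℝ → ℝ := fun t =>
    (Real.exp (Real.exp ((N:ℝ) * Q t)) * (Real.exp ((N:ℝ) * Q t) * ((N:ℝ) * Q1 t)) *
        (Real.exp ((N:ℝ) * Q t) * ((N:ℝ) * Q1 t)) +
      Real.exp (Real.exp ((N:ℝ) * Q t)) *
        (Real.exp ((N:ℝ) * Q t) * ((N:ℝ) * Q1 t) * ((N:ℝ) * Q1 t) +
          Real.exp ((N:ℝ) * Q t) * ((N:ℝ) * V2))) * P t +
      Real.exp (Real.exp ((N:ℝ) * Q t)) * (Real.exp ((N:ℝ) * Q t) * ((N:ℝ) * Q1 t)) * P1 t +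
      (Real.exp (Real.exp ((N:ℝ) * Q t)) * (Real.exp ((N:ℝ) * Q t) * ((N:ℝ) * Q1 t)) * P1 t +
        Real.exp (Real.exp ((N:ℝ) * Q t)) * P2 t) -
      1 / 2 * V2 with hgψ2def
  have hgψd : ∀ t, HasDerivAt gψ (gψ1 t) t := fun t => by
    rw [hgψdef, hgψ1def]
    exact ((hEd t).mul (hPd t)).sub ((hSd t).const_mul (1 / 2))
  have hgψ1d : ∀ t, HasDerivAt gψ1 (gψ2 t) t := fun t => by
    rw [hgψ1def, hgψ2def]
    exact ((((hEd t).mul ((hBd t).mul ((hQ1d t).const_mul (N:ℝ)))).mul (hPd t)).add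
      ((hEd t).mul (hP1d t))).sub ((hS1d t).const_mul (1 / 2))
  have hV2W : V2 = 2 * W ^ 2 := by
    rw [hV2def, hWdef, hnormsq, Finset.mul_sum]
    refine Finset.sum_congr rfl fun i _ => ?_
    rw [PiLp.sub_apply, hv]
  have hnonneg : ∀ t ∈ interior (Icc (0:ℝ) 1), 0 ≤ gψ2 t := by
    intro t ht
    rw [interior_Icc] at ht
    set u : EuclideanSpace ℝ (Fin n) := p + t • (q - p) with hu
    have hui : ∀ i, u i = p i + t * v i := by
      intro i
      rw [hu, hv]
      simp [PiLp.add_apply, PiLp.smul_apply, PiLp.sub_apply, smul_eq_mul]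
    have huX : u ∈ X := by
      have h2 := hXcon hp hq (by linarith [ht.2] : (0:ℝ) ≤ 1 - t) (le_of_lt ht.1) (by ring)
      have h3 : (1 - t) • p + t • q = u := by
        rw [hu, smul_sub, sub_smul, one_smul]; abel
      rwa [h3] at h2
    have hQu : Q t = ‖u - ξ‖ ^ 2 := by
      rw [hnormsq, hQdef]
      refine Finset.sum_congr rfl fun i _ => ?_
      rw [PiLp.sub_apply, hui i]
      ring
    have hQnn : 0 ≤ Q t := by rw [hQdef]; positivity
    have hbb1 : (1:ℝ) ≤ Real.exp ((N:ℝ) * Q t) :=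
      Real.one_le_exp (mul_nonneg (by positivity) hQnn)
    have ha1 : (1:ℝ) ≤ Real.exp (Real.exp ((N:ℝ) * Q t)) :=
      Real.one_le_exp (Real.exp_nonneg _)
    have hPm : m ≤ P t := by
      have h3 := hmX u huX
      rw [show (fun i => u i) = (fun i => p i + t * v i) from funext hui] at h3
      rw [hPdef]
      exact h3
    set R : ℝ := 1 + ‖u‖ with hRdef
    have hR1 : 1 ≤ R := by rw [hRdef]; linarith [norm_nonneg u]
    have hcoords : ∀ i, |p i + t * v i| ≤ R := by
      intro i
      rw [← hui i, hRdef]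
      linarith [hcoord u i, norm_nonneg u]
    have hW0 : 0 ≤ W := norm_nonneg _
    have hviW : ∀ i, |v i| ≤ W := by
      intro i
      have h4 := hcoord (q - p) i
      rw [PiLp.sub_apply] at h4
      rw [hv, hWdef]
      exact h4
    have hDD1 : ∀ i : Fin n, (pderiv i f).totalDegree ≤ DD := by
      intro i
      rw [hDD]
      have h := Finset.le_sup (f := fun i : Fin n => (pderiv i f).totalDegree)
        (Finset.mem_univ i)
      exact h.trans (le_max_left _ _)
    have hDD2 : ∀ i j : Fin n, (pderiv j (pderiv i f)).totalDegree ≤ DD := by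
      intro i j
      rw [hDD]
      have h := Finset.le_sup
        (f := fun ij : Fin n × Fin n => (pderiv ij.2 (pderiv ij.1 f)).totalDegree)
        (Finset.mem_univ (i, j))
      exact h.trans (le_max_right _ _)
    have hR0 : (0:ℝ) ≤ R := by linarith
    have hev1 : ∀ i, |eval (fun k => p k + t * v k) (pderiv i f)| ≤ c1 i * R ^ DD := by
      intro i
      refine le_trans (aux_eval_bound (pderiv i f) hR1 hcoords) ?_
      simp only [hc1]
      exact mul_le_mul_of_nonneg_left (pow_le_pow_right₀ hR1 (hDD1 i))
        (Finset.sum_nonneg fun _ _ => abs_nonneg _)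
    have hev2 : ∀ i j, |eval (fun k => p k + t * v k) (pderiv j (pderiv i f))| ≤
        c2 i j * R ^ DD := by
      intro i j
      refine le_trans (aux_eval_bound (pderiv j (pderiv i f)) hR1 hcoords) ?_
      simp only [hc2]
      exact mul_le_mul_of_nonneg_left (pow_le_pow_right₀ hR1 (hDD2 i j))
        (Finset.sum_nonneg fun _ _ => abs_nonneg _)
    have hRDDnn : (0:ℝ) ≤ R ^ DD := by positivity
    have hP1b : |P1 t| ≤ C1 * W * R ^ DD := by
      rw [hP1def]
      calc |∑ i, v i * eval (fun k => p k + t * v k) (pderiv i f)|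
          ≤ ∑ i, |v i * eval (fun k => p k + t * v k) (pderiv i f)| :=
            Finset.abs_sum_le_sum_abs _ _
        _ ≤ ∑ i, W * (c1 i * R ^ DD) := Finset.sum_le_sum fun i _ => by
            rw [abs_mul]
            exact mul_le_mul (hviW i) (hev1 i) (abs_nonneg _) hW0
        _ = C1 * W * R ^ DD := by
            rw [← Finset.mul_sum, ← Finset.sum_mul, hC1]
            ring
    have hP2b : |P2 t| ≤ C2 * W ^ 2 * R ^ DD := by
      rw [hP2def]
      calc |∑ i, v i * ∑ j, v j * eval (fun k => p k + t * v k) (pderiv j (pderiv i f))|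
          ≤ ∑ i, |v i * ∑ j, v j * eval (fun k => p k + t * v k) (pderiv j (pderiv i f))| :=
            Finset.abs_sum_le_sum_abs _ _
        _ ≤ ∑ i, W * (W * ((∑ j, c2 i j) * R ^ DD)) := Finset.sum_le_sum fun i _ => by
            rw [abs_mul]
            refine mul_le_mul (hviW i) ?_ (abs_nonneg _) hW0
            calc |∑ j, v j * eval (fun k => p k + t * v k) (pderiv j (pderiv i f))|
                ≤ ∑ j, |v j * eval (fun k => p k + t * v k) (pderiv j (pderiv i f))| :=
                  Finset.abs_sum_le_sum_abs _ _
              _ ≤ ∑ j, W * (c2 i j * R ^ DD) := Finset.sum_le_sum fun j _ => by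
                  rw [abs_mul]
                  exact mul_le_mul (hviW j) (hev2 i j) (abs_nonneg _) hW0
              _ = W * ((∑ j, c2 i j) * R ^ DD) := by
                  rw [← Finset.mul_sum, ← Finset.sum_mul]
        _ = C2 * W ^ 2 * R ^ DD := by
            rw [← Finset.mul_sum, ← Finset.mul_sum, ← Finset.sum_mul, hC2]
            ring
    have hBAD : P1 t ^ 2 / m + |P2 t| ≤ K * W ^ 2 * R ^ EE := by
      have hsq : P1 t ^ 2 ≤ (C1 * W * R ^ DD) ^ 2 := by
        have h5 := pow_le_pow_left₀ (abs_nonneg (P1 t)) hP1b 2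
        rwa [sq_abs] at h5
      have hRE : (R ^ DD) ^ 2 = R ^ EE := by
        rw [← pow_mul, hEE, Nat.mul_comm]
      have hsq2 : P1 t ^ 2 ≤ C1 ^ 2 * W ^ 2 * R ^ EE := by
        calc P1 t ^ 2 ≤ (C1 * W * R ^ DD) ^ 2 := hsq
          _ = C1 ^ 2 * W ^ 2 * (R ^ DD) ^ 2 := by ring
          _ = C1 ^ 2 * W ^ 2 * R ^ EE := by rw [hRE]
      have hP2E : |P2 t| ≤ C2 * W ^ 2 * R ^ EE := by
        refine hP2b.trans (mul_le_mul_of_nonneg_left (pow_le_pow_right₀ hR1 (by omega)) ?_)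
        exact mul_nonneg hC2nn (sq_nonneg W)
      have e1 : P1 t ^ 2 / m ≤ C1 ^ 2 * W ^ 2 * R ^ EE / m :=
        div_le_div_of_nonneg_right hsq2 hm.le
      calc P1 t ^ 2 / m + |P2 t| ≤ C1 ^ 2 * W ^ 2 * R ^ EE / m + C2 * W ^ 2 * R ^ EE :=
            add_le_add e1 hP2E
        _ = K * W ^ 2 * R ^ EE := by rw [hKdef]; ring
    have hNnn : (0:ℝ) ≤ (N:ℝ) := by positivity
    have hkeyu := aux_key ξ hr hm hKnn EE N hξ hN1 hNm u
    rw [← hQu, ← hRdef] at hkeyu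
    simp only [hgψ2def]
    rw [hV2W]
    exact aux_pos (a := Real.exp (Real.exp ((N:ℝ) * Q t))) (bb := Real.exp ((N:ℝ) * Q t))
      (s := (N:ℝ) * Q1 t) (Pt := P t) (P1t := P1 t) (P2t := P2 t) (W := W) (R := R ^ EE)
      (NN := (N:ℝ)) hm ha1 hbb1 hPm hBAD hNnn hkeyu
  have hcont : ContinuousOn gψ (Icc (0:ℝ) 1) := fun t _ =>
    (hgψd t).continuousAt.continuousWithinAt
  have hconv : ConvexOn ℝ (Icc (0:ℝ) 1) gψ :=
    convexOn_of_hasDerivWithinAt2_nonneg (convex_Icc 0 1) hcont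
      (fun t _ => (hgψd t).hasDerivWithinAt) (fun t _ => (hgψ1d t).hasDerivWithinAt) hnonneg
  have hcomb := hconv.2 (left_mem_Icc.2 zero_le_one) (right_mem_Icc.2 zero_le_one) ha hb hab
  simp only [smul_eq_mul, mul_zero, mul_one, zero_add] at hcomb
  have hval : ∀ (u : EuclideanSpace ℝ (Fin n)) (t : ℝ), (∀ i, u i = p i + t * v i) →
      Real.exp (Real.exp ((N:ℝ) * ‖u - ξ‖ ^ 2)) * eval (fun i => u i) f - 1 / 2 * ‖u‖ ^ 2
        = gψ t := by
    intro u t hui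
    have h1 : ‖u - ξ‖ ^ 2 = Q t := by
      rw [hnormsq, hQdef]
      exact Finset.sum_congr rfl fun i _ => by rw [PiLp.sub_apply, hui i]; ring
    have h2 : ‖u‖ ^ 2 = S t := by
      rw [hnormsq, hSdef]
      exact Finset.sum_congr rfl fun i _ => by rw [hui i]
    have h3 : eval (fun i => u i) f = P t := by
      rw [hPdef]
      exact congrArg (fun z : Fin n → ℝ => eval z f) (funext hui)
    rw [h1, h2, h3, hgψdef]
  have e0 := hval p 0 (fun i => by ring)
  have e1 := hval q 1 (fun i => by simp only [hv]; ring)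
  have eb := hval (a • p + b • q) b (fun i => by
    simp only [PiLp.add_apply, PiLp.smul_apply, smul_eq_mul, hv]
    rw [show a = 1 - b by linarith]
    ring)
  simpa only [smul_eq_mul, eb, e0, e1] using hcomb
end

section
/- Let f(x,y,z) = [(yz+1)² + y²][(xz² - 1)²(xz² + 1)² + y² + z² + 1]. Then f ≥ 1/2 on ℝ³, and for every N ∈ ℝ there exists ξ ∈ ℝ³ such that Φ_{N,ξ}(x,y,z) = e^{e^{N(|（x,y,z)-ξ|²)}} f(x,y,z) is not convex on ℝ³; specifically, for ξ = (0, t⁻¹, -t) with t sufficiently large, ∂²Φ_{N,ξ}/∂x²(ξ) = e(2N f(ξ) + ∂²f/∂x²(ξ)) < 0, since f(ξ) = 2t⁻² + t⁻⁴ + 1 and ∂²f/∂x²(ξ) = -4t². -/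
open Real Set

/-! Along the line through `ξ = (0, t⁻¹, -t)` parallel to the `x`-axis, `f` restricts to the even
quartic `t⁶x⁴ - 2t²x² + f(ξ)`, while the weight `x ↦ exp (exp (N x²))` has value `e`, slope `0` and
second derivative `2Ne` at `x = 0`. Leibniz' rule thus gives `∂²Φ/∂x²(ξ) = e (2N f(ξ) - 4t²)`, which
is negative as soon as `t > 2|N|` because `f(ξ) ≤ 4` for `t ≥ 1`. A convex function has a
nonnegative second derivative along every line, so `Φ_{N,ξ}` is not convex. -/

/-- `f(x,y,z) = [(yz+1)² + y²][(xz²-1)²(xz²+1)² + y² + z² + 1]`. -/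
noncomputable def f16 (p : ℝ × ℝ × ℝ) : ℝ :=
  ((p.2.1 * p.2.2 + 1) ^ 2 + p.2.1 ^ 2) *
    ((p.1 * p.2.2 ^ 2 - 1) ^ 2 * (p.1 * p.2.2 ^ 2 + 1) ^ 2 + p.2.1 ^ 2 + p.2.2 ^ 2 + 1)

/-- `Φ_{N,ξ}(p) = e^{e^{N|p-ξ|²}} f(p)` with the Euclidean squared distance. -/
noncomputable def Phi16 (N : ℝ) (ξ p : ℝ × ℝ × ℝ) : ℝ :=
  Real.exp (Real.exp (N *
    ((p.1 - ξ.1) ^ 2 + (p.2.1 - ξ.2.1) ^ 2 + (p.2.2 - ξ.2.2) ^ 2))) * f16 p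

theorem ConvexOn.comp_prodMk_right {E : Type*} [AddCommGroup E] [Module ℝ E] {F : ℝ × E → ℝ}
    (hF : ConvexOn ℝ univ F) (y : E) : ConvexOn ℝ univ fun x => F (x, y) := by
  have hline : (fun x => F (x, y)) = F ∘ AffineMap.lineMap (0, y) (1, y) := by
    funext x
    simp [AffineMap.lineMap_apply]
  simpa only [hline, preimage_univ] using hF.comp_affineMap (AffineMap.lineMap (0, y) (1, y))

theorem ConvexOn.deriv_deriv_nonneg {φ : ℝ → ℝ} (hφ : ConvexOn ℝ univ φ)
    (hd : Differentiable ℝ φ) (a : ℝ) : 0 ≤ deriv (deriv φ) a :=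
  (monotoneOn_univ.1 (hφ.monotoneOn_deriv fun x _ => hd x)).deriv_nonneg

theorem deriv_deriv_mul {h g : ℝ → ℝ} (hh : ContDiff ℝ 2 h) (hg : ContDiff ℝ 2 g) (a : ℝ) :
    deriv (deriv fun x => h x * g x) a =
      deriv (deriv h) a * g a + 2 * (deriv h a * deriv g a) + h a * deriv (deriv g) a := by
  have hh₁ := hh.differentiable two_ne_zero
  have hg₁ := hg.differentiable two_ne_zero
  have hderiv : deriv (fun x => h x * g x) = deriv h * g + h * deriv g :=
    funext fun x => deriv_mul (hh₁ x) (hg₁ x)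
  rw [hderiv, ((((hh.differentiable_deriv_two a).hasDerivAt.mul (hg₁ a).hasDerivAt).add
    ((hh₁ a).hasDerivAt.mul (hg.differentiable_deriv_two a).hasDerivAt))).deriv]
  ring

theorem deriv_deriv_quartic_zero (a b c : ℝ) :
    deriv (deriv fun x : ℝ => a * x ^ 4 + b * x ^ 2 + c) 0 = 2 * b := by
  have hderiv (x : ℝ) : HasDerivAt (fun x : ℝ => a * x ^ 4 + b * x ^ 2 + c)
      ((4 * a * x ^ 2 + 2 * b) * x) x :=
    ((((hasDerivAt_pow 4 x).const_mul a).add ((hasDerivAt_pow 2 x).const_mul b)).add_const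
      c).congr_deriv (by ring)
  have hB : DifferentiableAt ℝ (fun x : ℝ => 4 * a * x ^ 2 + 2 * b) 0 := by fun_prop
  rw [funext fun x => (hderiv x).deriv]
  change deriv ((fun x : ℝ => 4 * a * x ^ 2 + 2 * b) * id) 0 = _
  rw [(hB.hasDerivAt.mul (hasDerivAt_id 0)).deriv]
  simp

section DoubleExponentialWeight

variable (N : ℝ)

theorem hasDerivAt_exp_exp_mul_sq (x : ℝ) :
    HasDerivAt (fun x => exp (exp (N * x ^ 2)))
      (2 * N * exp (N * x ^ 2) * exp (exp (N * x ^ 2)) * x) x :=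
  (((hasDerivAt_pow 2 x).const_mul N).exp).exp.congr_deriv (by ring)

theorem deriv_exp_exp_mul_sq_zero : deriv (fun x => exp (exp (N * x ^ 2))) 0 = 0 := by
  simp [(hasDerivAt_exp_exp_mul_sq N 0).deriv]

theorem deriv_deriv_exp_exp_mul_sq_zero :
    deriv (deriv fun x => exp (exp (N * x ^ 2))) 0 = 2 * N * exp 1 := by
  set A : ℝ → ℝ := fun x => 2 * N * exp (N * x ^ 2) * exp (exp (N * x ^ 2))
  have hderiv : deriv (fun x => exp (exp (N * x ^ 2))) = A * id :=
    funext fun x => (hasDerivAt_exp_exp_mul_sq N x).deriv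
  have hA : DifferentiableAt ℝ A 0 := by fun_prop
  rw [hderiv, (hA.hasDerivAt.mul (hasDerivAt_id 0)).deriv]
  simp [A]

theorem deriv_deriv_exp_exp_mul_sq_mul_zero {g : ℝ → ℝ} (hg : ContDiff ℝ 2 g) :
    deriv (deriv fun x => exp (exp (N * x ^ 2)) * g x) 0 =
      exp 1 * (2 * N * g 0 + deriv (deriv g) 0) := by
  rw [deriv_deriv_mul (by fun_prop) hg, deriv_deriv_exp_exp_mul_sq_zero,
    deriv_exp_exp_mul_sq_zero]
  simp only [zero_pow two_ne_zero, mul_zero, exp_zero]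
  ring

end DoubleExponentialWeight

theorem one_le_f16 (p : ℝ × ℝ × ℝ) : 1 ≤ f16 p := by
  obtain ⟨x, y, z⟩ := p
  -- Lagrange's identity `(a² + b²)(c² + d²) = (ac + bd)² + (ad - bc)²` with `(c, d) = (z, 1)`
  have lagrange : ((y * z + 1) ^ 2 + y ^ 2) * (z ^ 2 + 1) = (y * z ^ 2 + y + z) ^ 2 + 1 := by ring
  have hB : z ^ 2 + 1 ≤ (x * z ^ 2 - 1) ^ 2 * (x * z ^ 2 + 1) ^ 2 + y ^ 2 + z ^ 2 + 1 := by
    nlinarith [sq_nonneg ((x * z ^ 2 - 1) * (x * z ^ 2 + 1)), sq_nonneg y]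
  calc (1 : ℝ) ≤ ((y * z + 1) ^ 2 + y ^ 2) * (z ^ 2 + 1) := by
        rw [lagrange]; nlinarith [sq_nonneg (y * z ^ 2 + y + z)]
    _ ≤ f16 (x, y, z) := mul_le_mul_of_nonneg_left hB (by positivity)

theorem contDiff_f16_slice (y z : ℝ) : ContDiff ℝ 2 fun x => f16 (x, y, z) := by
  unfold f16; fun_prop

theorem differentiable_Phi16_slice (N : ℝ) (ξ : ℝ × ℝ × ℝ) (y z : ℝ) :
    Differentiable ℝ fun x => Phi16 N ξ (x, y, z) := by
  unfold Phi16 f16; fun_prop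

theorem Phi16_slice (N x y z : ℝ) :
    Phi16 N (0, y, z) (x, y, z) = exp (exp (N * x ^ 2)) * f16 (x, y, z) := by
  simp [Phi16]

theorem deriv_deriv_Phi16_slice (N y z : ℝ) :
    deriv (deriv fun x => Phi16 N (0, y, z) (x, y, z)) 0 =
      exp 1 * (2 * N * f16 (0, y, z) + deriv (deriv fun x => f16 (x, y, z)) 0) := by
  simp only [Phi16_slice]
  exact deriv_deriv_exp_exp_mul_sq_mul_zero N (contDiff_f16_slice y z)

theorem f16_slice_eq_quartic {t : ℝ} (ht : t ≠ 0) (x : ℝ) :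
    f16 (x, t⁻¹, -t) = t ^ 6 * x ^ 4 + (-2 * t ^ 2) * x ^ 2 + (2 * t⁻¹ ^ 2 + t⁻¹ ^ 4 + 1) := by
  simp only [f16]
  field_simp
  ring

theorem f16_xi {t : ℝ} (ht : t ≠ 0) : f16 (0, t⁻¹, -t) = 2 * t⁻¹ ^ 2 + t⁻¹ ^ 4 + 1 := by
  simpa using f16_slice_eq_quartic ht 0

theorem deriv_deriv_f16_slice {t : ℝ} (ht : t ≠ 0) :
    deriv (deriv fun x => f16 (x, t⁻¹, -t)) 0 = -4 * t ^ 2 := by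
  simp only [f16_slice_eq_quartic ht, deriv_deriv_quartic_zero]
  ring

theorem two_mul_mul_f16_xi_lt {N t : ℝ} (ht : 2 * |N| + 1 ≤ t) :
    2 * N * f16 (0, t⁻¹, -t) < 4 * t ^ 2 := by
  have ht₁ : 1 ≤ t := by linarith [abs_nonneg N]
  have hu₀ : 0 ≤ t⁻¹ := by positivity
  have hu₁ : t⁻¹ ≤ 1 := inv_le_one_of_one_le₀ ht₁
  have hf : f16 (0, t⁻¹, -t) ≤ 4 := by
    rw [f16_xi (by positivity)]
    nlinarith [pow_le_one₀ hu₀ hu₁ (n := 2), pow_le_one₀ hu₀ hu₁ (n := 4)]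
  have hf₀ : 0 ≤ f16 (0, t⁻¹, -t) := zero_le_one.trans (one_le_f16 _)
  calc 2 * N * f16 (0, t⁻¹, -t) ≤ 2 * |N| * 4 := by
        nlinarith [le_abs_self N, abs_nonneg N]
    _ < 4 * t := by linarith
    _ ≤ 4 * t ^ 2 := by nlinarith

/-- `f ≥ 1/2` on `ℝ³`; for `t > 0` and `ξ = (0, t⁻¹, -t)` one has
`f(ξ) = 2t⁻² + t⁻⁴ + 1`, `∂²f/∂x²(ξ) = -4t²` and
`∂²Φ_{N,ξ}/∂x²(ξ) = e(2N f(ξ) + ∂²f/∂x²(ξ))`; for every `N` and all `t` large enough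
this second derivative is negative, and `Φ_{N,ξ}` is not convex on `ℝ³`. -/
theorem stmt16 :
    (∀ p : ℝ × ℝ × ℝ, (1 : ℝ) / 2 ≤ f16 p) ∧
    (∀ t : ℝ, 0 < t →
      f16 (0, t⁻¹, -t) = 2 * t⁻¹ ^ 2 + t⁻¹ ^ 4 + 1 ∧
      deriv (deriv (fun x : ℝ => f16 (x, t⁻¹, -t))) 0 = -4 * t ^ 2) ∧
    (∀ N : ℝ, ∀ t : ℝ, 0 < t →
      deriv (deriv (fun x : ℝ => Phi16 N (0, t⁻¹, -t) (x, t⁻¹, -t))) 0 =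
        Real.exp 1 * (2 * N * f16 (0, t⁻¹, -t) +
          deriv (deriv (fun x : ℝ => f16 (x, t⁻¹, -t))) 0)) ∧
    ∀ N : ℝ, ∃ T : ℝ, ∀ t : ℝ, T ≤ t →
      deriv (deriv (fun x : ℝ => Phi16 N (0, t⁻¹, -t) (x, t⁻¹, -t))) 0 < 0 ∧
      ¬ ConvexOn ℝ Set.univ (Phi16 N (0, t⁻¹, -t)) := by
  refine ⟨fun p => le_trans (by norm_num) (one_le_f16 p),
    fun t ht => ⟨f16_xi ht.ne', deriv_deriv_f16_slice ht.ne'⟩,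
    fun N t _ => deriv_deriv_Phi16_slice N _ _, fun N => ⟨2 * |N| + 1, fun t hT => ?_⟩⟩
  have ht : t ≠ 0 := (show 0 < t by linarith [abs_nonneg N]).ne'
  have hneg : deriv (deriv fun x => Phi16 N (0, t⁻¹, -t) (x, t⁻¹, -t)) 0 < 0 := by
    rw [deriv_deriv_Phi16_slice, deriv_deriv_f16_slice ht]
    exact mul_neg_of_pos_of_neg (exp_pos 1) (by linarith [two_mul_mul_f16_xi_lt hT])
  refine ⟨hneg, fun hconv => hneg.not_ge ?_⟩
  exact (hconv.comp_prodMk_right _).deriv_deriv_nonneg (differentiable_Phi16_slice _ _ _ _) 0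
end

section
/- Let X ⊆ ℝⁿ be compact convex, f a polynomial positive on X, and suppose that for every ξ ∈ X the function φ_ξ(x) = e^{|x-ξ|²} f(x) is μ-strongly convex on X for some fixed μ > 0. Define a₀ ∈ X arbitrary and a_{ν+1} = argmin_X φ_{a_ν}. Then for every ν ∈ ℕ, f(a_{ν+1}) ≤ (f(a_ν) - (μ/2)|a_{ν+1} - a_ν|²) / e^{|a_{ν+1} - a_ν|²}; in particular the sequence f(a_ν) is decreasing. -/
open Real Set MvPolynomial

/-- Let `X ⊆ ℝⁿ` be compact convex, `f` a polynomial positive on `X`,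
and suppose `φ_ξ(x) = e^{|x-ξ|²} f(x)` is `μ`-strongly convex on `X` for every
`ξ ∈ X`, where `μ > 0` is fixed. If `a₀ ∈ X` and `a_{ν+1} = argmin_X φ_{a_ν}`, then
`f(a_{ν+1}) ≤ (f(a_ν) - (μ/2)|a_{ν+1} - a_ν|²)/e^{|a_{ν+1} - a_ν|²}` for every `ν`;
in particular the sequence `f(a_ν)` is decreasing. -/
theorem stmt17 {n : ℕ} (X : Set (EuclideanSpace ℝ (Fin n)))
    (hXc : IsCompact X) (hXcon : Convex ℝ X)
    (f : MvPolynomial (Fin n) ℝ)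
    (hpos : ∀ x ∈ X, 0 < MvPolynomial.eval (fun i => x i) f)
    (μ : ℝ) (hμ : 0 < μ)
    (hφ : ∀ ξ ∈ X, StrongConvexOn X μ
      (fun x => Real.exp (‖x - ξ‖ ^ 2) * MvPolynomial.eval (fun i => x i) f))
    (a : ℕ → EuclideanSpace ℝ (Fin n)) (ha0 : a 0 ∈ X)
    (hmem : ∀ ν : ℕ, a (ν + 1) ∈ X)
    (hargmin : ∀ ν : ℕ, ∀ y ∈ X,
      Real.exp (‖a (ν + 1) - a ν‖ ^ 2) * MvPolynomial.eval (fun i => (a (ν + 1)) i) f ≤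
        Real.exp (‖y - a ν‖ ^ 2) * MvPolynomial.eval (fun i => y i) f) :
    (∀ ν : ℕ,
      MvPolynomial.eval (fun i => (a (ν + 1)) i) f ≤
        (MvPolynomial.eval (fun i => (a ν) i) f - μ / 2 * ‖a (ν + 1) - a ν‖ ^ 2) /
          Real.exp (‖a (ν + 1) - a ν‖ ^ 2)) ∧
    Antitone (fun ν => MvPolynomial.eval (fun i => (a ν) i) f) := by
  have haX : ∀ ν, a ν ∈ X := by
    intro ν
    cases ν with
    | zero => exact ha0
    | succ k => exact hmem k
  -- key inequality
  have key : ∀ ν : ℕ,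
      Real.exp (‖a (ν + 1) - a ν‖ ^ 2) * MvPolynomial.eval (fun i => (a (ν + 1)) i) f
        + μ / 2 * ‖a (ν + 1) - a ν‖ ^ 2 ≤ MvPolynomial.eval (fun i => (a ν) i) f := by
    intro ν
    set d : ℝ := ‖a (ν + 1) - a ν‖ with hd
    set F₁ : ℝ := MvPolynomial.eval (fun i => (a (ν + 1)) i) f with hF₁
    set F₀ : ℝ := MvPolynomial.eval (fun i => (a ν) i) f with hF₀
    have hd0 : 0 ≤ d := norm_nonneg _
    apply le_of_forall_pos_le_add
    intro ε hε
    set t : ℝ := min (ε / (μ / 2 * d ^ 2 + 1)) (1 / 2) with ht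
    have hden : 0 < μ / 2 * d ^ 2 + 1 := by positivity
    have ht0 : 0 < t := lt_min (by positivity) (by norm_num)
    have ht1 : t ≤ 1 / 2 := min_le_right _ _
    have htε : t * (μ / 2 * d ^ 2) ≤ ε := by
      have h1 : t ≤ ε / (μ / 2 * d ^ 2 + 1) := min_le_left _ _
      have h2 : t * (μ / 2 * d ^ 2) ≤ (ε / (μ / 2 * d ^ 2 + 1)) * (μ / 2 * d ^ 2) := by
        apply mul_le_mul_of_nonneg_right h1 (by positivity)
      calc t * (μ / 2 * d ^ 2)
          ≤ (ε / (μ / 2 * d ^ 2 + 1)) * (μ / 2 * d ^ 2) := h2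
        _ ≤ ε := by
            rw [div_mul_eq_mul_div, div_le_iff₀ hden]
            nlinarith [hε.le]
    -- strong convexity at ξ = a ν
    have hsc := (hφ (a ν) (haX ν)).2 (haX ν) (hmem ν) (le_of_lt ht0)
      (by linarith : (0:ℝ) ≤ 1 - t) (by ring)
    set z : EuclideanSpace ℝ (Fin n) := t • a ν + (1 - t) • a (ν + 1) with hz
    have hzX : z ∈ X := hXcon (haX ν) (hmem ν) (le_of_lt ht0) (by linarith) (by ring)
    have hmin := hargmin ν z hzX
    have hφν : Real.exp (‖a ν - a ν‖ ^ 2) * F₀ = F₀ := by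
      simp
    have hnorm : ‖a ν - a (ν + 1)‖ = d := by rw [hd, norm_sub_rev]
    have hsc' : Real.exp (‖z - a ν‖ ^ 2) * MvPolynomial.eval (fun i => z i) f ≤
        t * F₀ + (1 - t) * (Real.exp (d ^ 2) * F₁) - t * (1 - t) * (μ / 2 * d ^ 2) := by
      simpa [smul_eq_mul, hnorm, sub_self, norm_zero, Real.exp_zero] using hsc
    have hchain : Real.exp (d ^ 2) * F₁ ≤
        t * F₀ + (1 - t) * (Real.exp (d ^ 2) * F₁) - t * (1 - t) * (μ / 2 * d ^ 2) :=
      le_trans hmin hsc'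
    -- divide by t
    have h2 : Real.exp (d ^ 2) * F₁ + (1 - t) * (μ / 2 * d ^ 2) ≤ F₀ := by
      have := hchain
      nlinarith [ht0]
    nlinarith [htε]
  have hexp : ∀ ν : ℕ, (0:ℝ) < Real.exp (‖a (ν + 1) - a ν‖ ^ 2) := fun ν => Real.exp_pos _
  have main : ∀ ν : ℕ,
      MvPolynomial.eval (fun i => (a (ν + 1)) i) f ≤
        (MvPolynomial.eval (fun i => (a ν) i) f - μ / 2 * ‖a (ν + 1) - a ν‖ ^ 2) /
          Real.exp (‖a (ν + 1) - a ν‖ ^ 2) := by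
    intro ν
    rw [le_div_iff₀ (hexp ν)]
    have := key ν
    linarith [this]
  refine ⟨main, antitone_nat_of_succ_le ?_⟩
  intro ν
  have h1 := main ν
  have h2 := hpos (a (ν + 1)) (hmem ν)
  have h3 : (1:ℝ) ≤ Real.exp (‖a (ν + 1) - a ν‖ ^ 2) := Real.one_le_exp (by positivity)
  have h4 := key ν
  nlinarith [hexp ν, norm_nonneg (a (ν + 1) - a ν), sq_nonneg (‖a (ν + 1) - a ν‖)]
end

section
/- Let f : [0,η] → ℝ be C¹ with 0 < f ≤ C and f' ≤ -η on [0,η], for some C ≥ 1/2 and η > 0. Assume φ(x) = e^{x²} f(x) is strictly convex on [0,η]. Then b₁ := argmin_{[0,η]} φ satisfies b₁ ≥ η/(2C), and hence f(0) - f(b₁) ≥ η²/(2C). -/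
open Real Set

/-! The derivative of `φ x = exp (x ^ 2) * f x` is `exp (x ^ 2) * (2 * x * f x + f' x)`, and on
`[0, η / (2C)]` we have `2 * x * f x ≤ 2 * x * C < η ≤ -f' x`, so `φ` is strictly decreasing there
and its minimiser `b₁` lies to the right of `η / (2C)` (which is `≤ η` as `2C ≥ 1`). The mean value
theorem with `f' ≤ -η` then gives `f 0 - f b₁ ≥ η * b₁ ≥ η ^ 2 / (2C)`. -/

theorem hasDerivAt_exp_sq_mul {f : ℝ → ℝ} {x : ℝ} (hf : DifferentiableAt ℝ f x) :
    HasDerivAt (fun y => exp (y ^ 2) * f y) (exp (x ^ 2) * (2 * x * f x + deriv f x)) x := by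
  have hexp : HasDerivAt (fun y => exp (y ^ 2)) (exp (x ^ 2) * (2 * x)) x := by
    simpa using (hasDerivAt_pow 2 x).exp
  exact (hexp.fun_mul hf.hasDerivAt).congr_deriv (by ring)

theorem strictAntiOn_exp_sq_mul {f : ℝ → ℝ} {a b : ℝ} (hfc : ContinuousOn f (Icc a b))
    (hfd : DifferentiableOn ℝ f (Ioo a b)) (hneg : ∀ x ∈ Ioo a b, 2 * x * f x + deriv f x < 0) :
    StrictAntiOn (fun x => exp (x ^ 2) * f x) (Icc a b) := by
  refine strictAntiOn_of_deriv_neg (convex_Icc a b) ((by fun_prop : Continuous fun x : ℝ =>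
    exp (x ^ 2)).continuousOn.mul hfc) fun x hx => ?_
  rw [interior_Icc] at hx
  rw [(hasDerivAt_exp_sq_mul (hfd.differentiableAt (Ioo_mem_nhds hx.1 hx.2))).deriv]
  exact mul_neg_of_pos_of_neg (exp_pos _) (hneg x hx)

theorem stmt18_general (η C : ℝ) (hη : 0 < η) (hC : (1 : ℝ) / 2 ≤ C)
    (f : ℝ → ℝ) (hf : ContDiffOn ℝ 1 f (Set.Icc 0 η))
    (hfC : ∀ x ∈ Set.Icc 0 η, f x ≤ C)
    (hf' : ∀ x ∈ Set.Icc 0 η, deriv f x ≤ -η)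
    (b₁ : ℝ) (hb₁ : b₁ ∈ Set.Icc 0 η)
    (hmin : ∀ x ∈ Set.Icc 0 η,
      Real.exp (b₁ ^ 2) * f b₁ ≤ Real.exp (x ^ 2) * f x) :
    η / (2 * C) ≤ b₁ ∧ η ^ 2 / (2 * C) ≤ f 0 - f b₁ := by
  have hC2 : 0 < 2 * C := by linarith
  have hfd : DifferentiableOn ℝ f (Icc 0 η) := hf.differentiableOn one_ne_zero
  set c := η / (2 * C) with hc
  have hcη : c ≤ η := div_le_self hη.le (by linarith)
  have hcI : Icc 0 c ⊆ Icc 0 η := Icc_subset_Icc_right hcη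
  have hanti : StrictAntiOn (fun x => exp (x ^ 2) * f x) (Icc 0 c) := by
    refine strictAntiOn_exp_sq_mul (hfd.continuousOn.mono hcI)
      (hfd.mono (Ioo_subset_Icc_self.trans hcI)) fun x hx => ?_
    have hxI : x ∈ Icc 0 η := hcI (Ioo_subset_Icc_self hx)
    have hxc : 2 * x * C < η := by
      have := hx.2; rw [hc, lt_div_iff₀ hC2] at this; linarith
    nlinarith [hfC x hxI, hf' x hxI, hx.1]
  have hc_mem : c ∈ Icc 0 c := ⟨div_nonneg hη.le hC2.le, le_rfl⟩
  have hb₁c : c ≤ b₁ := by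
    by_contra! h
    exact (hmin c (hcI hc_mem)).not_gt (hanti ⟨hb₁.1, h.le⟩ hc_mem h)
  have hmvt : f b₁ - f 0 ≤ -η * (b₁ - 0) :=
    (convex_Icc 0 η).image_sub_le_mul_sub_of_deriv_le hfd.continuousOn
      (hfd.mono interior_subset) (fun x hx => hf' x (interior_subset hx)) 0
      (left_mem_Icc.2 hη.le) b₁ hb₁ hb₁.1
  refine ⟨hb₁c, ?_⟩
  calc η ^ 2 / (2 * C) = η * c := by rw [hc]; ring
    _ ≤ η * b₁ := mul_le_mul_of_nonneg_left hb₁c hη.le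
    _ ≤ f 0 - f b₁ := by linarith

/-- Let `f : [0,η] → ℝ` be `C¹` with `0 < f ≤ C` and `f' ≤ -η` on
`[0,η]`, `C ≥ 1/2`, `η > 0`. If `φ(x) = e^{x²} f(x)` is strictly convex on `[0,η]`,
then `b₁ := argmin_{[0,η]} φ` satisfies `b₁ ≥ η/(2C)`; hence
`f(0) - f(b₁) ≥ η²/(2C)`. -/
theorem stmt18 (η C : ℝ) (hη : 0 < η) (hC : (1 : ℝ) / 2 ≤ C)
    (f : ℝ → ℝ) (hf : ContDiffOn ℝ 1 f (Set.Icc 0 η))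
    (hfpos : ∀ x ∈ Set.Icc 0 η, 0 < f x) (hfC : ∀ x ∈ Set.Icc 0 η, f x ≤ C)
    (hf' : ∀ x ∈ Set.Icc 0 η, deriv f x ≤ -η)
    (hconv : StrictConvexOn ℝ (Set.Icc 0 η) (fun x => Real.exp (x ^ 2) * f x))
    (b₁ : ℝ) (hb₁ : b₁ ∈ Set.Icc 0 η)
    (hmin : ∀ x ∈ Set.Icc 0 η,
      Real.exp (b₁ ^ 2) * f b₁ ≤ Real.exp (x ^ 2) * f x) :
    η / (2 * C) ≤ b₁ ∧ η ^ 2 / (2 * C) ≤ f 0 - f b₁ :=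
  stmt18_general η C hη hC f hf hfC hf' b₁ hb₁ hmin
end
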